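/- arXiv:0910.2335 — 2 statements merged into one kernel-verified Lean document; each statement's English description precedes it below -/
import Mathlib

section
/- Let A be a C*-algebra, E and F Hilbert A-modules, and Ψ : E → F a ℂ-linear local map, i.e., for all x ∈ E and a ∈ A, x·a = 0 implies Ψ(x)·a = 0. Then for every idempotent p ∈ A (p² = p) and every x ∈ E, one has Ψ(x·p) = Ψ(x)·p. -/
/-!
Write `y := x·p`. Since `(x - y)·p = 0`, locality gives `Ψ(x)·p = Ψ(y)·p`. Since `y·p = y`, the
element `y` is not moved by `a - p a` for any `a`, so neither is `Ψ(y)`: the vector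
`Ψ(y) - Ψ(y)·p` is annihilated by all of `A`. In a Hilbert module such a vector `z` vanishes,
because `b := ⟨z, z⟩` is self-adjoint with `b * b = ⟨z, z·b⟩ = 0`, hence `b = 0` by the
C*-identity. Thus `Ψ(x·p) = Ψ(y)·p = Ψ(x)·p`.
-/

noncomputable section

/-- Data of a (right) Hilbert C*-module structure on `E` over `A`. -/
structure HilbertModuleData (A : Type*) (E : Type*)
    [NonUnitalRing A] [StarRing A] [Module ℂ A] [PartialOrder A] [Norm A]
    [NormedAddCommGroup E] [Module ℂ E] where
  smulA : E → A → E
  smulA_add_left : ∀ x y a, smulA (x + y) a = smulA x a + smulA y a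
  smulA_add_right : ∀ x a b, smulA x (a + b) = smulA x a + smulA x b
  smulA_mul : ∀ x a b, smulA x (a * b) = smulA (smulA x a) b
  smulA_smulC_left : ∀ (c : ℂ) x a, smulA (c • x) a = c • smulA x a
  smulA_smulC_right : ∀ (c : ℂ) x a, smulA x (c • a) = c • smulA x a
  inner : E → E → A
  inner_add_right : ∀ x y z, inner x (y + z) = inner x y + inner x z
  inner_smulC : ∀ (c : ℂ) x y, inner x (c • y) = c • inner x y
  inner_smulA : ∀ x y a, inner x (smulA y a) = inner x y * a
  star_inner : ∀ x y, star (inner x y) = inner y x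
  inner_self_nonneg : ∀ x, 0 ≤ inner x x
  inner_self_eq_zero : ∀ x, inner x x = 0 ↔ x = 0
  norm_eq : ∀ x, ‖x‖ = Real.sqrt ‖inner x x‖

namespace HilbertModuleData

section Algebraic

variable {A E : Type*} [NonUnitalRing A] [StarRing A] [Module ℂ A] [PartialOrder A] [Norm A]
  [NormedAddCommGroup E] [Module ℂ E] (h : HilbertModuleData A E)

theorem smulA_sub_left (x y : E) (a : A) : h.smulA (x - y) a = h.smulA x a - h.smulA y a :=
  (AddMonoidHom.mk' (h.smulA · a) (h.smulA_add_left · · a)).map_sub x y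

theorem smulA_sub_right (x : E) (a b : A) : h.smulA x (a - b) = h.smulA x a - h.smulA x b :=
  (AddMonoidHom.mk' (h.smulA x) (h.smulA_add_right x)).map_sub a b

theorem inner_zero_right (x : E) : h.inner x 0 = 0 :=
  (AddMonoidHom.mk' (h.inner x) (h.inner_add_right x)).map_zero

end Algebraic

theorem eq_zero_of_forall_smulA_eq_zero {A E : Type*} [NonUnitalNormedRing A] [StarRing A]
    [CStarRing A] [Module ℂ A] [PartialOrder A] [NormedAddCommGroup E] [Module ℂ E]
    (h : HilbertModuleData A E) {z : E} (hz : ∀ a, h.smulA z a = 0) : z = 0 := by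
  set b := h.inner z z
  have hb_sq : star b * b = 0 := by
    rw [h.star_inner, ← h.inner_smulA, hz, inner_zero_right]
  exact (h.inner_self_eq_zero z).mp (CStarRing.star_mul_self_eq_zero_iff b |>.mp hb_sq)

end HilbertModuleData

section LocalMap

variable {A E F : Type*} [NonUnitalRing A] [StarRing A] [Module ℂ A] [PartialOrder A] [Norm A]
  [NormedAddCommGroup E] [Module ℂ E] [NormedAddCommGroup F] [Module ℂ F]
  (hE : HilbertModuleData A E) (hF : HilbertModuleData A F)

def IsLocalMap (Ψ : E → F) : Prop :=
  ∀ (x : E) (a : A), hE.smulA x a = 0 → hF.smulA (Ψ x) a = 0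

variable {hE hF}

theorem IsLocalMap.smulA_congr_left {G : Type*} [FunLike G E F] [AddMonoidHomClass G E F]
    {Ψ : G} (hΨ : IsLocalMap hE hF Ψ) {x y : E} {a : A} (hxy : hE.smulA x a = hE.smulA y a) :
    hF.smulA (Ψ x) a = hF.smulA (Ψ y) a := by
  have := hΨ (x - y) a (by rw [hE.smulA_sub_left, hxy, sub_self])
  rwa [map_sub, hF.smulA_sub_left, sub_eq_zero] at this

theorem IsLocalMap.smulA_congr_right {Ψ : E → F} (hΨ : IsLocalMap hE hF Ψ) {x : E} {a b : A}
    (hab : hE.smulA x a = hE.smulA x b) : hF.smulA (Ψ x) a = hF.smulA (Ψ x) b := by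
  have := hΨ x (a - b) (by rw [hE.smulA_sub_right, hab, sub_self])
  rwa [hF.smulA_sub_right, sub_eq_zero] at this

end LocalMap

theorem local_map_commutes_with_idempotents_general
    {A : Type*} [NonUnitalNormedRing A] [StarRing A] [CStarRing A]
    [NormedSpace ℂ A] [PartialOrder A]
    {E F : Type*} [NormedAddCommGroup E] [Module ℂ E]
    [NormedAddCommGroup F] [Module ℂ F]
    (hE : HilbertModuleData A E) (hF : HilbertModuleData A F)
    (Ψ : E →ₗ[ℂ] F)
    (hlocal : ∀ (x : E) (a : A), hE.smulA x a = 0 → hF.smulA (Ψ x) a = 0)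
    (p : A) (hp : IsIdempotentElem p) (x : E) :
    Ψ (hE.smulA x p) = hF.smulA (Ψ x) p := by
  have hΨ : IsLocalMap hE hF Ψ := hlocal
  set y := hE.smulA x p
  have hy : hE.smulA y p = y := by rw [← hE.smulA_mul, hp.eq]
  have hx : hF.smulA (Ψ x) p = hF.smulA (Ψ y) p := hΨ.smulA_congr_left hy.symm
  have hΨy : Ψ y - hF.smulA (Ψ y) p = 0 := hF.eq_zero_of_forall_smulA_eq_zero fun a => by
    have hpa : hF.smulA (Ψ y) a = hF.smulA (Ψ y) (p * a) :=
      hΨ.smulA_congr_right (by rw [hE.smulA_mul, hy])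
    rw [hF.smulA_sub_left, ← hF.smulA_mul, hpa, sub_self]
  rw [hx, ← sub_eq_zero.mp hΨy]

/-- A `ℂ`-linear local map between Hilbert C*-modules commutes with the action of
every idempotent of `A`. -/
theorem local_map_commutes_with_idempotents
    {A : Type*} [NonUnitalNormedRing A] [StarRing A] [CStarRing A]
    [NormedSpace ℂ A] [SMulCommClass ℂ A A] [IsScalarTower ℂ A A]
    [PartialOrder A] [StarOrderedRing A] [CompleteSpace A]
    {E F : Type*} [NormedAddCommGroup E] [Module ℂ E]
    [NormedAddCommGroup F] [Module ℂ F]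
    (hE : HilbertModuleData A E) (hF : HilbertModuleData A F)
    (Ψ : E →ₗ[ℂ] F)
    (hlocal : ∀ (x : E) (a : A), hE.smulA x a = 0 → hF.smulA (Ψ x) a = 0)
    (p : A) (hp : IsIdempotentElem p) (x : E) :
    Ψ (hE.smulA x p) = hF.smulA (Ψ x) p :=
  local_map_commutes_with_idempotents_general hE hF Ψ hlocal p hp x
end
end

section
/- Let A be a unital C*-algebra, E and F Hilbert A-modules, θ : E → F an A-module map preserving orthogonality, and x₀ ∈ E with ⟨x₀, x₀⟩ = 1. Set u := ⟨θ(x₀), θ(x₀)⟩. Then for every symmetry w ∈ A (w = w*, w² = 1), one has w·u·w = u. -/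
noncomputable section

namespace HilbertModuleData

section

variable {A E : Type*} [NonUnitalRing A] [StarRing A] [Module ℂ A] [PartialOrder A] [Norm A]
  [NormedAddCommGroup E] [Module ℂ E] (hE : HilbertModuleData A E)

theorem inner_smulA_left (x y : E) (a : A) :
    hE.inner (hE.smulA x a) y = star a * hE.inner x y := by
  rw [← hE.star_inner, hE.inner_smulA, star_mul, hE.star_inner]

theorem inner_smulA_smulA (x : E) (a b : A) :
    hE.inner (hE.smulA x a) (hE.smulA x b) = star a * hE.inner x x * b := by
  rw [hE.inner_smulA, hE.inner_smulA_left]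

end

/-- The unit vector `x₀` turns the relation `star a * b = 0` in `A` into orthogonality of
`x₀ a` and `x₀ b`, which an orthogonality-preserving module map transports to `F`. -/
theorem star_mul_inner_map_mul_eq_zero {A E F : Type*} [Ring A] [StarRing A] [Module ℂ A]
    [PartialOrder A] [Norm A] [NormedAddCommGroup E] [Module ℂ E] [NormedAddCommGroup F]
    [Module ℂ F] (hE : HilbertModuleData A E) (hF : HilbertModuleData A F) {θ : E → F}
    (hmod : ∀ (x : E) (a : A), θ (hE.smulA x a) = hF.smulA (θ x) a)
    (horth : ∀ x y : E, hE.inner x y = 0 → hF.inner (θ x) (θ y) = 0)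
    {x₀ : E} (hx₀ : hE.inner x₀ x₀ = 1) {a b : A} (hab : star a * b = 0) :
    star a * hF.inner (θ x₀) (θ x₀) * b = 0 := by
  have horth_ab : hE.inner (hE.smulA x₀ a) (hE.smulA x₀ b) = 0 := by
    rw [hE.inner_smulA_smulA, hx₀, mul_one, hab]
  simpa only [hmod, hF.inner_smulA_smulA] using horth _ _ horth_ab

end HilbertModuleData

theorem IsSelfAdjoint.mul_mul_self_eq_of_star_mul_eq_zero {A : Type*} [Ring A] [StarRing A]
    [IsAddTorsionFree A] {u w : A} (hu : ∀ a b : A, star a * b = 0 → star a * u * b = 0)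
    (hw : IsSelfAdjoint w) (hw2 : w * w = 1) : w * u * w = u := by
  have hadd : star (1 + w) = 1 + w := ((IsSelfAdjoint.one A).add hw).star_eq
  have hsub : star (1 - w) = 1 - w := ((IsSelfAdjoint.one A).sub hw).star_eq
  have add_mul_sub : (1 + w) * (1 - w) = 0 :=
    calc (1 + w) * (1 - w) = 1 - w * w := by noncomm_ring
      _ = 0 := by rw [hw2, sub_self]
  have sub_mul_add : (1 - w) * (1 + w) = 0 :=
    calc (1 - w) * (1 + w) = 1 - w * w := by noncomm_ring
      _ = 0 := by rw [hw2, sub_self]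
  have h₁ := hu (1 + w) (1 - w) (by rw [hadd, add_mul_sub])
  have h₂ := hu (1 - w) (1 + w) (by rw [hsub, sub_mul_add])
  rw [hadd] at h₁
  rw [hsub] at h₂
  have h : (2 : ℕ) • u - (2 : ℕ) • (w * u * w) =
      (1 + w) * u * (1 - w) + (1 - w) * u * (1 + w) := by noncomm_ring
  rw [h₁, h₂, add_zero, sub_eq_zero] at h
  exact (nsmul_right_injective two_ne_zero h).symm

theorem symmetry_conjugation_fixes_u_general
    {A : Type*} [NormedRing A] [StarRing A] [NormedAlgebra ℂ A]
    [PartialOrder A]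
    {E F : Type*} [NormedAddCommGroup E] [Module ℂ E]
    [NormedAddCommGroup F] [Module ℂ F]
    (hE : HilbertModuleData A E) (hF : HilbertModuleData A F)
    (θ : E →ₗ[ℂ] F)
    (hmod : ∀ (x : E) (a : A), θ (hE.smulA x a) = hF.smulA (θ x) a)
    (horth : ∀ x y : E, hE.inner x y = 0 → hF.inner (θ x) (θ y) = 0)
    (x₀ : E) (hx₀ : hE.inner x₀ x₀ = 1)
    (w : A) (hw : IsSelfAdjoint w) (hw2 : w * w = 1) :
    w * hF.inner (θ x₀) (θ x₀) * w = hF.inner (θ x₀) (θ x₀) := by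
  have : IsAddTorsionFree A := .of_isTorsionFree ℂ A
  exact hw.mul_mul_self_eq_of_star_mul_eq_zero
    (fun _ _ hab ↦ hE.star_mul_inner_map_mul_eq_zero hF hmod horth hx₀ hab) hw2

/-- If `θ` is an orthogonality-preserving `A`-module map and `⟨x₀,x₀⟩ = 1`,
then `u := ⟨θ x₀, θ x₀⟩` satisfies `w * u * w = u` for every symmetry `w`. -/
theorem symmetry_conjugation_fixes_u
    {A : Type*} [NormedRing A] [StarRing A] [CStarRing A] [NormedAlgebra ℂ A]
    [StarModule ℂ A] [PartialOrder A] [StarOrderedRing A] [CompleteSpace A]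
    {E F : Type*} [NormedAddCommGroup E] [Module ℂ E]
    [NormedAddCommGroup F] [Module ℂ F]
    (hE : HilbertModuleData A E) (hF : HilbertModuleData A F)
    (θ : E →ₗ[ℂ] F)
    (hmod : ∀ (x : E) (a : A), θ (hE.smulA x a) = hF.smulA (θ x) a)
    (horth : ∀ x y : E, hE.inner x y = 0 → hF.inner (θ x) (θ y) = 0)
    (x₀ : E) (hx₀ : hE.inner x₀ x₀ = 1)
    (w : A) (hw : IsSelfAdjoint w) (hw2 : w * w = 1) :
    w * hF.inner (θ x₀) (θ x₀) * w = hF.inner (θ x₀) (θ x₀) :=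
  symmetry_conjugation_fixes_u_general hE hF θ hmod horth x₀ hx₀ w hw hw2
end
end
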